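/- Let α : ℚ[K₁, K₂, G₂, G₃, Q] → ℚ[k₁, g₂, g₃] be the ℚ-algebra homomorphism determined by K₁ ↦ k₁, G₂ ↦ g₂, G₃ ↦ g₃, K₂ ↦ 2g₂ − k₁², Q ↦ −g₂(k₁² − 4g₂), and let β : ℚ[K₁, K₂, G₂, G₃, Q] → ℚ[k₁, k₂, g₂, q] be the ℚ-algebra homomorphism determined by K₁ ↦ k₁, K₂ ↦ k₂, G₂ ↦ g₂, G₃ ↦ 0, Q ↦ q. Then ker(α) ∩ ker(β) is the ideal of ℚ[K₁, K₂, G₂, G₃, Q] generated by the two polynomials G₃(K₂ − 2G₂ + K₁²) and G₃(Q + G₂(K₁² − 4G₂)). -/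

import Mathlib

/-!
Modulo the relations `r₁ = K₂ − 2G₂ + K₁²` and `r₂ = Q + G₂(K₁² − 4G₂)` every polynomial is
congruent to one in `K₁, G₂, G₃` alone, on which `α` is injective, so `ker α = (r₁, r₂)`.
The map `β` factors through the substitution `e : G₃ ↦ 0`, which fixes `r₁, r₂` and moves every
polynomial by a multiple of `G₃`. Hence if `p = a r₁ + b r₂` and `e p = 0`, then
`p = p − e p = (a − e a) r₁ + (b − e b) r₂ ∈ (G₃) · (r₁, r₂)`.
-/

open MvPolynomial

theorem MvPolynomial.algHom_sub_mem_of_forall_X {σ R A : Type*} [CommSemiring R] [CommRing A]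
    [Algebra R A] {φ ψ : MvPolynomial σ R →ₐ[R] A} {I : Ideal A}
    (h : ∀ i, φ (X i) - ψ (X i) ∈ I) (p : MvPolynomial σ R) : φ p - ψ p ∈ I := by
  have hmk : (Ideal.Quotient.mkₐ R I).comp φ = (Ideal.Quotient.mkₐ R I).comp ψ :=
    algHom_ext fun i => Ideal.Quotient.eq.mpr (h i)
  exact Ideal.Quotient.eq.mp (AlgHom.congr_fun hmk p)

theorem Ideal.span_inf_ker_le_mul {R : Type*} [CommRing R] (e : R →+* R) {J : Ideal R}
    (hJ : ∀ r, r - e r ∈ J) {S : Set R} (hS : ∀ s ∈ S, e s = s) :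
    Ideal.span S ⊓ RingHom.ker e ≤ J * Ideal.span S := by
  have key : ∀ p ∈ Ideal.span S, p - e p ∈ J * Ideal.span S := by
    intro p hp
    induction hp using Submodule.span_induction with
    | mem s hs => simp [hS s hs]
    | zero => simp
    | add x y _ _ hx hy =>
      rw [map_add, add_sub_add_comm]
      exact add_mem hx hy
    | smul c p hp ih =>
      have hep : e p ∈ Ideal.span S := by
        simpa only [sub_sub_cancel] using sub_mem hp (Ideal.mul_le_right ih)
      rw [smul_eq_mul, map_mul, show c * p - e c * e p = c * (p - e p) + (c - e c) * e p by ring]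
      exact add_mem (Ideal.mul_mem_left _ _ ih) (Ideal.mul_mem_mul (hJ c) hep)
  rintro p ⟨hp, hep⟩
  simpa [RingHom.mem_ker.mp hep] using key p hp

namespace KernelIntersection

noncomputable def α₀ : MvPolynomial (Fin 5) ℚ →ₐ[ℚ] MvPolynomial (Fin 3) ℚ :=
  aeval ![X 0, 2 * X 1 - X 0 ^ 2, X 1, X 2, -(X 1) * (X 0 ^ 2 - 4 * X 1)]

noncomputable def β₀ : MvPolynomial (Fin 5) ℚ →ₐ[ℚ] MvPolynomial (Fin 4) ℚ :=
  aeval ![X 0, X 1, X 2, 0, X 3]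

def relations : Set (MvPolynomial (Fin 5) ℚ) :=
  {X 1 - 2 * X 2 + X 0 ^ 2, X 4 + X 2 * (X 0 ^ 2 - 4 * X 2)}

noncomputable def specializeG₃ : MvPolynomial (Fin 5) ℚ →ₐ[ℚ] MvPolynomial (Fin 5) ℚ :=
  aeval ![X 0, X 1, X 2, 0, X 4]

theorem ker_α₀_le_span_relations : RingHom.ker α₀.toRingHom ≤ Ideal.span relations := by
  intro p hp
  -- `k₁ ↦ K₁, g₂ ↦ G₂, g₃ ↦ G₃` is a left inverse of `α₀` modulo the relations.
  have hsection := MvPolynomial.algHom_sub_mem_of_forall_X (φ := AlgHom.id ℚ _)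
    (ψ := (aeval ![X 0, X 2, X 3]).comp α₀) (I := Ideal.span relations) ?_ p
  · have hp' : α₀ p = 0 := hp
    simpa only [AlgHom.id_apply, AlgHom.comp_apply, hp', map_zero, sub_zero] using hsection
  intro i
  fin_cases i
  · simp [α₀]
  · exact Ideal.subset_span (Or.inl (by simp [α₀, map_ofNat]; ring))
  · simp [α₀]
  · simp [α₀]
  · exact Ideal.subset_span (Or.inr (by simp [α₀, map_ofNat]))

theorem relations_subset_ker_α₀ : relations ⊆ RingHom.ker α₀.toRingHom := by
  rintro r (rfl | rfl) <;> simp [α₀, map_ofNat]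

theorem ker_α₀ : RingHom.ker α₀.toRingHom = Ideal.span relations :=
  le_antisymm ker_α₀_le_span_relations (Ideal.span_le.mpr relations_subset_ker_α₀)

theorem X_three_mem_ker_β₀ : X 3 ∈ RingHom.ker β₀.toRingHom := by
  simp [β₀]

theorem ker_β₀_le_ker_specializeG₃ :
    RingHom.ker β₀.toRingHom ≤ RingHom.ker specializeG₃.toRingHom := by
  have hfactor : (aeval ![X 0, X 1, X 2, X 4]).comp β₀ = specializeG₃ := by
    ext i : 1
    fin_cases i <;> simp [β₀, specializeG₃]
  intro p (hp : β₀ p = 0)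
  change specializeG₃ p = 0
  rw [← hfactor, AlgHom.comp_apply, hp, map_zero]

theorem sub_specializeG₃_mem (r : MvPolynomial (Fin 5) ℚ) :
    r - specializeG₃ r ∈ Ideal.span {X 3} := by
  refine MvPolynomial.algHom_sub_mem_of_forall_X (φ := AlgHom.id ℚ _) (fun i => ?_) r
  fin_cases i <;> simp [specializeG₃]

theorem specializeG₃_relations : ∀ r ∈ relations, specializeG₃ r = r := by
  rintro r (rfl | rfl) <;> simp [specializeG₃, map_ofNat]

end KernelIntersection

open KernelIntersection in
theorem kernel_intersection
    (α : MvPolynomial (Fin 5) ℚ →ₐ[ℚ] MvPolynomial (Fin 3) ℚ)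
    (β : MvPolynomial (Fin 5) ℚ →ₐ[ℚ] MvPolynomial (Fin 4) ℚ)
    (hα : α = aeval ![(X 0 : MvPolynomial (Fin 3) ℚ), 2 * X 1 - X 0 ^ 2, X 1, X 2,
        -(X 1) * (X 0 ^ 2 - 4 * X 1)])
    (hβ : β = aeval ![(X 0 : MvPolynomial (Fin 4) ℚ), X 1, X 2, 0, X 3]) :
    RingHom.ker α.toRingHom ⊓ RingHom.ker β.toRingHom = Ideal.span
      {X 3 * (X 1 - 2 * X 2 + X 0 ^ 2),
       X 3 * (X 4 + X 2 * (X 0 ^ 2 - 4 * X 2))} := by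
  subst hα hβ
  change RingHom.ker α₀.toRingHom ⊓ RingHom.ker β₀.toRingHom = _
  have hgen : Ideal.span {X 3 * (X 1 - 2 * X 2 + X 0 ^ 2),
      X 3 * (X 4 + X 2 * (X 0 ^ 2 - 4 * X 2))} = Ideal.span {X 3} * Ideal.span relations := by
    rw [Ideal.span_mul_span', relations, Set.singleton_mul, Set.image_insert_eq,
      Set.image_singleton]
  rw [hgen]
  refine le_antisymm ?_ (le_inf ?_ ?_)
  · calc RingHom.ker α₀.toRingHom ⊓ RingHom.ker β₀.toRingHom
        ≤ Ideal.span relations ⊓ RingHom.ker specializeG₃.toRingHom :=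
          inf_le_inf ker_α₀.le ker_β₀_le_ker_specializeG₃
      _ ≤ Ideal.span {X 3} * Ideal.span relations :=
          Ideal.span_inf_ker_le_mul _ sub_specializeG₃_mem specializeG₃_relations
  · exact Ideal.mul_le_right.trans ker_α₀.ge
  · exact Ideal.mul_le_left.trans ((Ideal.span_singleton_le_iff_mem _).mpr X_three_mem_ker_β₀)
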